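/- arXiv:2207.06609 — 4 statements merged into one kernel-verified Lean document; each statement's English description precedes it below -/
import Mathlib

section
/- Let F_{C→D} = 4 M κ N_S (N_S+1) / (1 + N_B + N_S(2N_B + 2 - κ)) and F_CS = 4 M κ N_S / (1 + 2 N_B), with M > 0, κ ∈ (0,1), N_S > 0, N_B ≥ 0. Then F_{C→D} ≥ F_CS if and only if N_S ≤ N_B / (1 - κ). -/
/-- the C→D Fisher information beats the coherent-state one
iff `N_S ≤ N_B / (1 - κ)`. -/
theorem stmt4 (M κ NS NB : ℝ) (hM : 0 < M) (hκ0 : 0 < κ) (hκ1 : κ < 1)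
    (hNS : 0 < NS) (hNB : 0 ≤ NB) :
    4 * M * κ * NS * (NS + 1) / (1 + NB + NS * (2 * NB + 2 - κ))
        ≥ 4 * M * κ * NS / (1 + 2 * NB)
      ↔ NS ≤ NB / (1 - κ) := by
  have h1 : 0 < 1 + NB + NS * (2 * NB + 2 - κ) := by nlinarith
  have h2 : 0 < (1 : ℝ) + 2 * NB := by linarith
  rw [ge_iff_le, div_le_div_iff₀ h2 h1, le_div_iff₀ (by linarith : (0:ℝ) < 1 - κ)]
  have hP : (0:ℝ) < 4 * M * κ * NS := by positivity
  constructor <;> intro h <;> nlinarith [hP, mul_pos hP hNS, h]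
end

section
/- With F_{C→D} = 4 M κ N_S (N_S+1) / (1 + N_B + N_S(2N_B + 2 - κ)) and F_CS = 4 M κ N_S / (1 + 2 N_B), for fixed M > 0, κ ∈ (0,1), N_S > 0, the limit of F_{C→D}/F_CS as N_B → ∞ equals 2(N_S+1)/(1+2N_S); in particular this limit tends to 2 as N_S → 0. -/
open Filter Topology

theorem tendsto_affine_div_affine_atTop {a b c d : ℝ} (hc : c ≠ 0) :
    Tendsto (fun x : ℝ => (a * x + b) / (c * x + d)) atTop (𝓝 (a / c)) := by
  have hinv : Tendsto (fun x : ℝ => x⁻¹) atTop (𝓝 0) := tendsto_inv_atTop_zero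
  have hlim : Tendsto (fun x : ℝ => (a + b * x⁻¹) / (c + d * x⁻¹)) atTop
      (𝓝 ((a + b * 0) / (c + d * 0))) :=
    (tendsto_const_nhds.add (hinv.const_mul b)).div
      (tendsto_const_nhds.add (hinv.const_mul d)) (by simpa using hc)
  rw [mul_zero, mul_zero, add_zero, add_zero] at hlim
  refine hlim.congr' ?_
  filter_upwards [eventually_gt_atTop 0] with x hx
  field_simp

theorem stmt5_general (M κ NS : ℝ) (hM : 0 < M) (hκ0 : 0 < κ) (hNS : 0 < NS) :
    Tendsto (fun NB : ℝ =>
        (4 * M * κ * NS * (NS + 1) / (1 + NB + NS * (2 * NB + 2 - κ)))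
          / (4 * M * κ * NS / (1 + 2 * NB)))
      atTop (𝓝 (2 * (NS + 1) / (1 + 2 * NS))) ∧
    Tendsto (fun nS : ℝ => 2 * (nS + 1) / (1 + 2 * nS))
      (𝓝[>] (0 : ℝ)) (𝓝 2) := by
  constructor
  · have hK : 4 * M * κ * NS ≠ 0 := by positivity
    have hratio : (fun NB : ℝ =>
        (4 * M * κ * NS * (NS + 1) / (1 + NB + NS * (2 * NB + 2 - κ)))
          / (4 * M * κ * NS / (1 + 2 * NB))) = fun NB =>
        (2 * (NS + 1) * NB + (NS + 1)) / ((1 + 2 * NS) * NB + (1 + NS * (2 - κ))) := by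
      funext NB
      rw [div_div_div_eq, mul_comm _ (4 * M * κ * NS), mul_assoc, mul_div_mul_left _ _ hK]
      congr 1 <;> ring
    rw [hratio]
    exact tendsto_affine_div_affine_atTop (by positivity)
  · have hcont : ContinuousAt (fun nS : ℝ => 2 * (nS + 1) / (1 + 2 * nS)) 0 :=
      ContinuousAt.div (by fun_prop) (by fun_prop) (by norm_num)
    simpa using hcont.tendsto.mono_left nhdsWithin_le_nhds

/-- the ratio `F_{C→D}/F_CS` tends to `2(N_S+1)/(1+2N_S)` as
`N_B → ∞`, and this limit tends to `2` as `N_S → 0⁺`. -/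
theorem stmt5 (M κ NS : ℝ) (hM : 0 < M) (hκ0 : 0 < κ) (hκ1 : κ < 1) (hNS : 0 < NS) :
    Tendsto (fun NB : ℝ =>
        (4 * M * κ * NS * (NS + 1) / (1 + NB + NS * (2 * NB + 2 - κ)))
          / (4 * M * κ * NS / (1 + 2 * NB)))
      atTop (𝓝 (2 * (NS + 1) / (1 + 2 * NS))) ∧
    Tendsto (fun nS : ℝ => 2 * (nS + 1) / (1 + 2 * nS))
      (𝓝[>] (0 : ℝ)) (𝓝 2) :=
  stmt5_general M κ NS hM hκ0 hNS
end

section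
/- For B > 1, the function s ↦ 1/(Λ_s(B) + Λ_{1-s}(B)) on (0,1), where Λ_s(B) = ((B+1)^s + (B-1)^s)/((B+1)^s - (B-1)^s), is strictly concave and attains its maximum at s = 1/2, where its value equals 1/(2Λ_{1/2}(B)). -/
open Real Set

noncomputable def LambdaCB (s ν : ℝ) : ℝ :=
  ((ν + 1) ^ s + (ν - 1) ^ s) / ((ν + 1) ^ s - (ν - 1) ^ s)

/-!
With `a = B + 1` and `b = B - 1`, clearing denominators and using `a ^ s * a ^ (1 - s) = a` gives
`1 / (Λ_s + Λ_{1-s}) = (a + b - (a^s b^(1-s) + b^s a^(1-s))) / (2 (a - b))`.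
Each term `a^s b^(1-s) = exp (s log a + (1 - s) log b)` is the exponential of a non-constant
affine function of `s`, hence strictly convex, so the right-hand side is strictly concave.
The function is symmetric under `s ↦ 1 - s`, so concavity puts its maximum at `s = 1/2`.
-/

lemma strictConvexOn_rpow_mul_rpow_one_sub {a b : ℝ} (ha : 0 < a) (hb : 0 < b) (hab : a ≠ b) :
    StrictConvexOn ℝ univ (fun s : ℝ => a ^ s * b ^ (1 - s)) := by
  have hlog : log a - log b ≠ 0 := sub_ne_zero.2 fun h => hab (log_injOn_pos ha hb h)
  refine ⟨convex_univ, fun x _ y _ hxy α β hα hβ hαβ => ?_⟩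
  have hne : log a * x + log b * (1 - x) ≠ log a * y + log b * (1 - y) := fun h =>
    hxy (mul_left_cancel₀ hlog (by linear_combination h))
  have key := strictConvexOn_exp.2 (mem_univ _) (mem_univ _) hne hα hβ hαβ
  simp only [rpow_def_of_pos ha, rpow_def_of_pos hb, ← exp_add, smul_eq_mul] at key ⊢
  convert key using 2
  linear_combination (-log b) * hαβ

lemma StrictConvexOn.const_sub_div {S : Set ℝ} {f : ℝ → ℝ} (hf : StrictConvexOn ℝ S f) (c : ℝ)
    {d : ℝ} (hd : 0 < d) : StrictConcaveOn ℝ S (fun x => (c - f x) / d) := by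
  refine ⟨hf.1, fun x hx y hy hxy α β hα hβ hαβ => ?_⟩
  have key := hf.2 hx hy hxy hα hβ hαβ
  simp only [smul_eq_mul] at key ⊢
  calc α * ((c - f x) / d) + β * ((c - f y) / d) = (c - (α * f x + β * f y)) / d := by
        linear_combination (c / d) * hαβ
    _ < (c - f (α * x + β * y)) / d := by gcongr

lemma ConcaveOn.apply_le_apply_half {S : Set ℝ} {f : ℝ → ℝ} {c x : ℝ} (hf : ConcaveOn ℝ S f)
    (hsymm : f (c - x) = f x) (hx : x ∈ S) (hcx : c - x ∈ S) : f x ≤ f (c / 2) := by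
  have key := hf.2 hx hcx (by norm_num : (0 : ℝ) ≤ 1 / 2) (by norm_num : (0 : ℝ) ≤ 1 / 2)
    (by norm_num)
  simp only [smul_eq_mul, hsymm] at key
  rw [show 1 / 2 * x + 1 / 2 * (c - x) = c / 2 by ring] at key
  linarith

lemma one_div_ratio_add_ratio_one_sub {a b s : ℝ} (ha : 0 ≤ a) (hb : 0 ≤ b)
    (hs : a ^ s ≠ b ^ s) (hs' : a ^ (1 - s) ≠ b ^ (1 - s)) :
    1 / ((a ^ s + b ^ s) / (a ^ s - b ^ s) + (a ^ (1 - s) + b ^ (1 - s)) / (a ^ (1 - s) - b ^ (1 - s)))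
      = (a + b - (a ^ s * b ^ (1 - s) + b ^ s * a ^ (1 - s))) / (2 * (a - b)) := by
  have hsum : s + (1 - s) ≠ 0 := by norm_num
  have hA : a ^ s * a ^ (1 - s) = a := by rw [← rpow_add' ha hsum]; norm_num
  have hB : b ^ s * b ^ (1 - s) = b := by rw [← rpow_add' hb hsum]; norm_num
  rw [div_add_div _ _ (sub_ne_zero.2 hs) (sub_ne_zero.2 hs'), one_div_div]
  congr 1
  · linear_combination hA + hB
  · linear_combination 2 * hA - 2 * hB

lemma one_div_lambdaCB_add_lambdaCB_one_sub {B s : ℝ} (hB : 1 < B) (hs : s ∈ Ioo 0 1) :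
    1 / (LambdaCB s B + LambdaCB (1 - s) B)
      = ((B + 1) + (B - 1) - ((B + 1) ^ s * (B - 1) ^ (1 - s) + (B - 1) ^ s * (B + 1) ^ (1 - s)))
        / (2 * ((B + 1) - (B - 1))) :=
  have hlt : B - 1 < B + 1 := by linarith
  one_div_ratio_add_ratio_one_sub (by linarith) (by linarith)
    (rpow_lt_rpow (by linarith) hlt hs.1).ne' (rpow_lt_rpow (by linarith) hlt (by linarith [hs.2])).ne'

/-- the Chernoff exponent function `s ↦ 1/(Λ_s(B)+Λ_{1-s}(B))`
is strictly concave on `(0,1)` and is maximized at `s = 1/2`, where it equals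
`1/(2Λ_{1/2}(B))`. -/
theorem stmt8 (B : ℝ) (hB : 1 < B) :
    StrictConcaveOn ℝ (Ioo (0 : ℝ) 1)
      (fun s => 1 / (LambdaCB s B + LambdaCB (1 - s) B)) ∧
    (∀ s ∈ Ioo (0 : ℝ) 1,
      1 / (LambdaCB s B + LambdaCB (1 - s) B)
        ≤ 1 / (LambdaCB (1 / 2) B + LambdaCB (1 - 1 / 2) B)) ∧
    1 / (LambdaCB (1 / 2) B + LambdaCB (1 - 1 / 2) B) = 1 / (2 * LambdaCB (1 / 2) B) := by
  have ha : 0 < B + 1 := by linarith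
  have hb : 0 < B - 1 := by linarith
  have hab : B + 1 ≠ B - 1 := by linarith
  have hconvex := (strictConvexOn_rpow_mul_rpow_one_sub ha hb hab).add
    (strictConvexOn_rpow_mul_rpow_one_sub hb ha hab.symm)
  have hconc : StrictConcaveOn ℝ (Ioo (0 : ℝ) 1)
      (fun s => 1 / (LambdaCB s B + LambdaCB (1 - s) B)) :=
    ((hconvex.const_sub_div _ (by linarith : (0 : ℝ) < 2 * ((B + 1) - (B - 1)))).subset
      (subset_univ _) (convex_Ioo 0 1)).congr
      fun s hs => (one_div_lambdaCB_add_lambdaCB_one_sub hB hs).symm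
  refine ⟨hconc, fun s hs => hconc.concaveOn.apply_le_apply_half (c := 1) ?_ hs ?_, ?_⟩
  · simp only [sub_sub_cancel, add_comm]
  · exact ⟨by linarith [hs.2], by linarith [hs.1]⟩
  · norm_num [two_mul]
end

section
/- With P(n) = E^n (E+1)^{-n-1} e^{-x/(E+1)} L_n(-x/(E(E+1))) as above (E > 0, x ≥ 0), the mean satisfies Σ_{n=0}^∞ n P(n) = E + x. -/
/-!
Writing `L_n(-z) = ∑ₖ C(n,k) zᵏ / k!` turns `∑ n tⁿ L_n(-z)` into a double series with
nonnegative terms, which may be summed in the other order. For fixed `k` the negative binomial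
series gives `∑ₙ n C(n,k) tⁿ = tᵏ (k + t) / (1 - t)^(k+2)`, and what remains is an exponential
series and its first moment in `w = z t / (1 - t)`:
`∑ₙ n tⁿ L_n(-z) = e^w (w + t) / (1 - t)²`.
For `t = E / (E + 1)` and `z = x / (E (E + 1))` one has `1 - t = 1 / (E + 1)` and
`w = x / (E + 1)`, so the prefactor `e^{-w} / (E + 1)` of `P` leaves `(E + 1)(w + t) = E + x`.
-/

open Real

noncomputable def laguerre (n : ℕ) (x : ℝ) : ℝ :=
  ∑ k ∈ Finset.range (n + 1), (n.choose k : ℝ) * (-x) ^ k / (Nat.factorial k : ℝ)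

open Finset

theorem Nat.mul_choose_eq_add_one_mul_choose_succ_add (n k : ℕ) :
    n * n.choose k = (k + 1) * n.choose (k + 1) + k * n.choose k := by
  rcases le_or_gt k n with hkn | hnk
  · rw [mul_comm (k + 1), Nat.choose_succ_right_eq, mul_comm k, ← mul_add,
      Nat.sub_add_cancel hkn, mul_comm]
  · simp [Nat.choose_eq_zero_of_lt hnk, Nat.choose_eq_zero_of_lt (hnk.trans k.lt_succ_self)]

section Geometric

variable {𝕜 : Type*} [NormedField 𝕜] {t : 𝕜}

theorem hasSum_choose_mul_geometric (ht : ‖t‖ < 1) (k : ℕ) :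
    HasSum (fun n : ℕ ↦ (n.choose k : 𝕜) * t ^ n) (t ^ k / (1 - t) ^ (k + 1)) := by
  have hshift : HasSum (fun n : ℕ ↦ ((n + k).choose k : 𝕜) * t ^ (n + k))
      (t ^ k / (1 - t) ^ (k + 1)) := by
    rw [div_eq_mul_one_div]
    exact ((hasSum_choose_mul_geometric_of_norm_lt_one k ht).mul_left (t ^ k)).congr_fun
      fun n ↦ by ring
  refine (hasSum_nat_add_iff' k).mp ?_
  rwa [sum_eq_zero fun i hi ↦ by simp [Nat.choose_eq_zero_of_lt (mem_range.mp hi)], sub_zero]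

theorem hasSum_natCast_mul_choose_mul_geometric (ht : ‖t‖ < 1) (k : ℕ) :
    HasSum (fun n : ℕ ↦ (n : 𝕜) * n.choose k * t ^ n) (t ^ k * (k + t) / (1 - t) ^ (k + 2)) := by
  have h1t : 1 - t ≠ 0 := sub_ne_zero.mpr fun h ↦ by simp [← h] at ht
  convert! ((hasSum_choose_mul_geometric ht (k + 1)).mul_left ((k : 𝕜) + 1)).add
    ((hasSum_choose_mul_geometric ht k).mul_left (k : 𝕜)) using 1
  · ext n
    have h := congrArg (Nat.cast : ℕ → 𝕜) (Nat.mul_choose_eq_add_one_mul_choose_succ_add n k)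
    push_cast at h
    linear_combination t ^ n * h
  · field_simp
    ring

end Geometric

theorem Real.hasSum_pow_div_factorial (c : ℝ) :
    HasSum (fun k : ℕ ↦ c ^ k / k.factorial) (exp c) :=
  exp_eq_exp_ℝ ▸ NormedSpace.expSeries_div_hasSum_exp c

theorem Real.hasSum_natCast_mul_pow_div_factorial (c : ℝ) :
    HasSum (fun k : ℕ ↦ k * c ^ k / k.factorial) (c * exp c) := by
  refine (hasSum_nat_add_iff' 1).mp ?_
  simp only [range_one, sum_singleton, CharP.cast_eq_zero, zero_mul, zero_div, sub_zero]
  convert! (Real.hasSum_pow_div_factorial c).mul_left c using 1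
  ext k
  rw [Nat.factorial_succ]
  push_cast
  field_simp
  ring

theorem hasSum_tsum_swap_of_nonneg {β γ : Type*} {f : β → γ → ℝ} {g : β → ℝ} {a : ℝ}
    (hf : ∀ b c, 0 ≤ f b c) (hfg : ∀ b, HasSum (f b) (g b)) (hg : HasSum g a) :
    HasSum (fun c ↦ ∑' b, f b c) a := by
  have hs : Summable (Function.uncurry f) :=
    (summable_prod_of_nonneg fun p ↦ hf p.1 p.2).2
      ⟨fun b ↦ (hfg b).summable, by simpa only [(hfg _).tsum_eq] using hg.summable⟩
  have ha : HasSum (Function.uncurry f) a := (hs.hasSum.prod_fiberwise hfg).unique hg ▸ hs.hasSum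
  exact ((Equiv.prodComm γ β).hasSum_iff.2 ha).prod_fiberwise
    fun c ↦ (hs.prod_symm.prod_factor c).hasSum

theorem laguerre_neg (n : ℕ) (z : ℝ) :
    laguerre n (-z) = ∑ k ∈ range (n + 1), (n.choose k : ℝ) * z ^ k / k.factorial := by
  simp only [laguerre, neg_neg]

theorem hasSum_natCast_mul_pow_mul_laguerre_neg {t z : ℝ} (ht₀ : 0 ≤ t) (ht₁ : t < 1)
    (hz : 0 ≤ z) :
    HasSum (fun n : ℕ ↦ n * t ^ n * laguerre n (-z))
      (exp (z * t / (1 - t)) * (z * t / (1 - t) + t) / (1 - t) ^ 2) := by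
  have htn : ‖t‖ < 1 := by rwa [Real.norm_of_nonneg ht₀]
  set w := z * t / (1 - t)
  set F : ℕ → ℕ → ℝ := fun k n ↦ n * n.choose k * t ^ n * (z ^ k / k.factorial)
  have hrow : ∀ k, HasSum (F k) (t ^ k * (k + t) / (1 - t) ^ (k + 2) * (z ^ k / k.factorial)) :=
    fun k ↦ (hasSum_natCast_mul_choose_mul_geometric htn k).mul_right _
  have hcol : ∀ n, ∑' k, F k n = n * t ^ n * laguerre n (-z) := fun n ↦ by
    rw [tsum_eq_sum (s := range (n + 1)) fun k hk ↦ by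
        simp [F, Nat.choose_eq_zero_of_lt (by simpa using hk : n < k)],
      laguerre_neg, mul_sum]
    exact sum_congr rfl fun k _ ↦ by ring
  have hsum : HasSum (fun k : ℕ ↦ t ^ k * (k + t) / (1 - t) ^ (k + 2) * (z ^ k / k.factorial))
      (exp w * (w + t) / (1 - t) ^ 2) := by
    convert! ((Real.hasSum_natCast_mul_pow_div_factorial w).add
      ((Real.hasSum_pow_div_factorial w).mul_left t)).div_const ((1 - t) ^ 2) using 1
    · ext k
      simp only [w, div_pow, mul_pow]
      field_simp
      ring
    · ring
  simpa only [hcol] using hasSum_tsum_swap_of_nonneg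
    (fun k n ↦ by simp only [F]; positivity) hrow hsum

noncomputable def displacedThermalProb (E x : ℝ) (n : ℕ) : ℝ :=
  E ^ n * (E + 1) ^ (-(n : ℤ) - 1) * Real.exp (-x / (E + 1)) * laguerre n (-x / (E * (E + 1)))

theorem displacedThermalProb_eq {E : ℝ} (hE : 0 < E) (x : ℝ) (n : ℕ) :
    displacedThermalProb E x n
      = exp (-(x / (E + 1))) / (E + 1) * ((E / (E + 1)) ^ n * laguerre n (-(x / (E * (E + 1))))) := by
  rw [displacedThermalProb, show -(n : ℤ) - 1 = -((n + 1 : ℕ) : ℤ) by push_cast; ring, zpow_neg,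
    zpow_natCast, neg_div, neg_div, div_pow]
  field_simp
  ring

/-- the mean photon number of a displaced thermal state with
thermal occupation `E` and displacement magnitude squared `x` is `E + x`. -/
theorem stmt18 (E x : ℝ) (hE : 0 < E) (hx : 0 ≤ x) :
    ∑' n : ℕ, (n : ℝ) * (E ^ n * (E + 1) ^ (-(n : ℤ) - 1) * Real.exp (-x / (E + 1))
        * laguerre n (-x / (E * (E + 1)))) = E + x := by
  set t := E / (E + 1)
  set z := x / (E * (E + 1))
  have h1t : 1 - t = (E + 1)⁻¹ := by simp only [t]; field_simp; ring
  have hw : z * t / (1 - t) = x / (E + 1) := by rw [h1t]; simp only [t, z]; field_simp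
  have hsum := hasSum_natCast_mul_pow_mul_laguerre_neg (by positivity)
    ((div_lt_one (by positivity)).2 (lt_add_one E)) (by positivity : 0 ≤ z)
  calc ∑' n : ℕ, (n : ℝ) * displacedThermalProb E x n
      = exp (-(x / (E + 1))) / (E + 1) * ∑' n : ℕ, n * t ^ n * laguerre n (-z) := by
        rw [← tsum_mul_left]
        exact tsum_congr fun n ↦ by rw [displacedThermalProb_eq hE]; ring
    _ = E + x := by
        rw [hsum.tsum_eq, hw, h1t, exp_neg]
        field_simp
        ring
end
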